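/- arXiv:1701.05842 — 4 statements merged into one kernel-verified Lean document; each statement's English description precedes it below -/
import Mathlib

section
/- Let Ψ(W) = Σ_y Σ_{s=0}^{W_y} (λ_y − k_c·s/β_y) + k_a Σ_{x,y} Σ_{s=0}^{W_{xy}} s, where W_y = Σ_x W_{xy}. If W and W' are allocation states related by W' = W − e_{x ȳ} + e_{x ȳ'} (moving one atom of unit x from resource ȳ to resource ȳ', with ȳ ≠ ȳ'), then Ψ(W') − Ψ(W) = f_{x ȳ'}(W') − f_{x ȳ}(W), where f_{xy}(W) = λ_y − k_c·W_y/β_y + k_a·W_{xy}. -/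
open Finset

/-- Column sum `W_y` of an allocation matrix. -/
def col {X : Type*} [Fintype X] (W : X → X → ℕ) (y : X) : ℕ := ∑ x, W x y

/-- Move one atom of unit `x` from resource `y` to resource `y'`. -/
def move {X : Type*} [DecidableEq X] (W : X → X → ℕ) (x y y' : X) : X → X → ℕ :=
  fun a b => (W a b + (if a = x ∧ b = y' then 1 else 0)) - (if a = x ∧ b = y then 1 else 0)

/-- Utility of unit `x` in using resource `y` under state `W`. -/
noncomputable def util {X : Type*} [Fintype X] (lam : X → ℝ) (β : X → ℕ) (kc ka : ℝ)
    (W : X → X → ℕ) (x y : X) : ℝ :=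
  lam y - kc * (col W y : ℝ) / (β y : ℝ) + ka * (W x y : ℝ)

/-- The potential function `Ψ`. -/
noncomputable def Psi {X : Type*} [Fintype X] (lam : X → ℝ) (β : X → ℕ) (kc ka : ℝ)
    (W : X → X → ℕ) : ℝ :=
  (∑ y, ∑ s ∈ Finset.range (col W y + 1), (lam y - kc * (s : ℝ) / (β y : ℝ)))
    + ka * ∑ x, ∑ y, ∑ s ∈ Finset.range (W x y + 1), (s : ℝ)

section Aux

variable {X : Type*} [Fintype X] [DecidableEq X]

lemma col_move_ne (W : X → X → ℕ) (xb yb yb' y : X) (h1 : y ≠ yb) (h2 : y ≠ yb') :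
    col (move W xb yb yb') y = col W y := by
  unfold col move
  refine Finset.sum_congr rfl fun a _ => ?_
  simp [h1, h2]

lemma col_move_src (W : X → X → ℕ) (xb yb yb' : X) (hne : yb ≠ yb') (hpos : 0 < W xb yb) :
    col (move W xb yb yb') yb + 1 = col W yb := by
  unfold col move
  have hsimp : ∀ a, (W a yb + (if a = xb ∧ yb = yb' then 1 else 0))
      - (if a = xb ∧ yb = yb then 1 else 0) = W a yb - (if a = xb then 1 else 0) := by
    intro a; simp [hne]
  rw [Finset.sum_congr rfl fun a _ => hsimp a]
  rw [Finset.sum_tsub_distrib _ (fun a _ => by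
    by_cases h : a = xb <;> simp [h] <;> omega)]
  have h1 : (∑ a : X, if a = xb then 1 else 0) = 1 := by simp
  have h2 : W xb yb ≤ ∑ a : X, W a yb :=
    Finset.single_le_sum (f := fun a => W a yb) (fun _ _ => Nat.zero_le _) (mem_univ xb)
  omega

lemma col_move_tgt (W : X → X → ℕ) (xb yb yb' : X) (hne : yb ≠ yb') :
    col (move W xb yb yb') yb' = col W yb' + 1 := by
  unfold col move
  have hsimp : ∀ a, (W a yb' + (if a = xb ∧ yb' = yb' then 1 else 0))
      - (if a = xb ∧ yb' = yb then 1 else 0) = W a yb' + (if a = xb then 1 else 0) := by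
    intro a; simp [hne.symm]
  rw [Finset.sum_congr rfl fun a _ => hsimp a, Finset.sum_add_distrib]
  simp

end Aux

/-- `Ψ` is an exact potential: moving one atom of unit `xb` from `yb` to `yb'` changes the
potential by exactly the change in utility experienced by `xb`. -/
theorem potential_identity {X : Type*} [Fintype X] [DecidableEq X]
    (lam : X → ℝ) (β : X → ℕ) (hβ : ∀ y, 1 ≤ β y) (kc ka : ℝ)
    (hkc : 0 ≤ kc) (hka : 0 ≤ ka)
    (W W' : X → X → ℕ) (xb yb yb' : X) (hne : yb ≠ yb') (hpos : 0 < W xb yb)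
    (hW' : W' = move W xb yb yb') :
    Psi lam β kc ka W' - Psi lam β kc ka W
      = util lam β kc ka W' xb yb' - util lam β kc ka W xb yb := by
  subst hW'
  set W' := move W xb yb yb' with hW'
  -- entrywise values of W'
  have hWsrc : W' xb yb + 1 = W xb yb := by
    simp only [hW', move, hne]; simp [hne]; omega
  have hWtgt : W' xb yb' = W xb yb' + 1 := by
    simp [hW', move, hne.symm]
  have hWother : ∀ a b, ¬(a = xb ∧ b = yb) → ¬(a = xb ∧ b = yb') → W' a b = W a b := by
    intro a b h1 h2
    simp [hW', move, h1, h2]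
  have hcsrc := col_move_src W xb yb yb' hne hpos
  have hctgt := col_move_tgt W xb yb yb' hne
  have hcne := col_move_ne W xb yb yb'
  -- first part
  set g : X → ℕ → ℝ := fun y s => lam y - kc * (s : ℝ) / (β y : ℝ) with hg
  have h1 : (∑ y, ∑ s ∈ Finset.range (col W' y + 1), g y s)
      - (∑ y, ∑ s ∈ Finset.range (col W y + 1), g y s)
      = g yb' (col W' yb') - g yb (col W yb) := by
    rw [← Finset.sum_sub_distrib]
    rw [← Finset.sum_subset (Finset.subset_univ ({yb, yb'} : Finset X))
      (fun y _ hy => ?_)]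
    · rw [Finset.sum_pair hne]
      have e1 : (∑ s ∈ Finset.range (col W' yb + 1), g yb s)
          - (∑ s ∈ Finset.range (col W yb + 1), g yb s) = - g yb (col W yb) := by
        rw [hcsrc, Finset.sum_range_succ]
        ring
      have e2 : (∑ s ∈ Finset.range (col W' yb' + 1), g yb' s)
          - (∑ s ∈ Finset.range (col W yb' + 1), g yb' s) = g yb' (col W' yb') := by
        rw [hctgt, Finset.sum_range_succ]
        ring
      rw [e1, e2]; ring
    · simp only [Finset.mem_insert, Finset.mem_singleton, not_or] at hy
      rw [hcne y hy.1 hy.2]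
      ring
  -- second part
  set h : X → X → ℕ → ℝ := fun _ _ s => (s : ℝ) with hh
  have h2 : (∑ x, ∑ y, ∑ s ∈ Finset.range (W' x y + 1), (s : ℝ))
      - (∑ x, ∑ y, ∑ s ∈ Finset.range (W x y + 1), (s : ℝ))
      = (W' xb yb' : ℝ) - (W xb yb : ℝ) := by
    rw [← Finset.sum_sub_distrib]
    rw [← Finset.sum_subset (Finset.subset_univ ({xb} : Finset X)) (fun a _ ha => ?_)]
    · rw [Finset.sum_singleton]
      rw [← Finset.sum_sub_distrib]
      rw [← Finset.sum_subset (Finset.subset_univ ({yb, yb'} : Finset X))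
        (fun y _ hy => ?_)]
      · rw [Finset.sum_pair hne]
        have e1 : (∑ s ∈ Finset.range (W' xb yb + 1), (s : ℝ))
            - (∑ s ∈ Finset.range (W xb yb + 1), (s : ℝ)) = -(W xb yb : ℝ) := by
          rw [hWsrc, Finset.sum_range_succ]
          ring
        have e2 : (∑ s ∈ Finset.range (W' xb yb' + 1), (s : ℝ))
            - (∑ s ∈ Finset.range (W xb yb' + 1), (s : ℝ)) = (W' xb yb' : ℝ) := by
          rw [hWtgt, Finset.sum_range_succ]
          push_cast
          ring
        rw [e1, e2]; ring
      · simp only [Finset.mem_insert, Finset.mem_singleton, not_or] at hy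
        rw [hWother xb y (fun h => hy.1 h.2) (fun h => hy.2 h.2)]
        ring
    · rw [← Finset.sum_sub_distrib]
      refine Finset.sum_eq_zero fun y _ => ?_
      simp only [Finset.mem_singleton] at ha
      rw [hWother a y (fun h => ha h.1) (fun h => ha h.1)]
      ring
  simp only [hg] at h1
  unfold Psi util
  linear_combination h1 + ka * h2
end

section
/- Under the Hall-type condition Σ_{x∈D} α_x ≤ Σ_{y∈N(D)} β_y for all D ⊆ X, from every partial allocation state W that is not a complete allocation state, there exists a finite sequence of elementary moves — each move being either an allocation move W → W + e_{xy} with W^x < α_x, y ∈ N_x, W_y < β_y, or a distribution move W → W − e_{xy} + e_{xy'} with W_{xy} > 0, y' ∈ N_x, W_{y'} < β_{y'} — leading to a complete allocation state (one with W^x = α_x for all x). -/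
open Finset

def Nout {X : Type*} [Fintype X] [DecidableEq X] (E : X → X → Prop) [DecidableRel E]
    (D : Finset X) : Finset X :=
  D.biUnion (fun x => Finset.univ.filter (fun y => E x y))

/-- Allocate one further atom of `x` into `y`. -/
def add1 {X : Type*} [DecidableEq X] (W : X → X → ℕ) (x y : X) : X → X → ℕ :=
  fun a b => W a b + (if a = x ∧ b = y then 1 else 0)

/-- An elementary move of the algorithm: either an allocation move or a distribution move. -/
def Step {X : Type*} [Fintype X] [DecidableEq X] (E : X → X → Prop) (α β : X → ℕ)
    (W W' : X → X → ℕ) : Prop :=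
  (∃ x y, E x y ∧ (∑ z, W x z) < α x ∧ col W y < β y ∧ W' = add1 W x y) ∨
  (∃ x y y', 0 < W x y ∧ E x y' ∧ col W y' < β y' ∧ W' = move W x y y')

section Aux

variable {X : Type*} [Fintype X] [DecidableEq X]

/-- Columns reachable from `x0` by an alternating path of length `n`. -/
def ReachN (E : X → X → Prop) (W : X → X → ℕ) (x0 : X) : ℕ → X → Prop
  | 0, y => E x0 y
  | (n+1), y' => ∃ x y, ReachN E W x0 n y ∧ 0 < W x y ∧ E x y'

lemma reachN_mono (E : X → X → Prop) {W W1 : X → X → ℕ} {x0 z : X}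
    (hW : ∀ a b, b ≠ z → W a b ≤ W1 a b) :
    ∀ n y, ReachN E W x0 n y → (∀ m, m < n → ¬ ReachN E W x0 m z) →
      ReachN E W1 x0 n y
  | 0, y, h, _ => h
  | (n+1), y', ⟨x, y, hy, hpos, hE⟩, hmin => by
    refine ⟨x, y, reachN_mono E hW n y hy (fun m hm => hmin m (Nat.lt_succ_of_lt hm)), ?_, hE⟩
    have hyz : y ≠ z := fun h => hmin n (Nat.lt_succ_self n) (h ▸ hy)
    exact lt_of_lt_of_le hpos (hW x y hyz)

lemma add1_row_self (W : X → X → ℕ) (x y : X) :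
    ∑ b, add1 W x y x b = (∑ b, W x b) + 1 := by
  simp [add1, Finset.sum_add_distrib]

lemma add1_row_ne (W : X → X → ℕ) {x a : X} (y : X) (h : a ≠ x) :
    ∑ b, add1 W x y a b = ∑ b, W a b := by
  simp [add1, h]

lemma add1_col_self (W : X → X → ℕ) (x y : X) :
    col (add1 W x y) y = col W y + 1 := by
  simp [add1, col, Finset.sum_add_distrib]

lemma add1_col_ne (W : X → X → ℕ) (x : X) {y b : X} (h : b ≠ y) :
    col (add1 W x y) b = col W b := by
  simp [add1, col, h]

lemma move_row (W : X → X → ℕ) {x y : X} (y' : X) (hpos : 0 < W x y) (a : X) :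
    ∑ b, move W x y y' a b = ∑ b, W a b := by
  unfold move
  rw [Finset.sum_tsub_distrib]
  · rw [Finset.sum_add_distrib]
    rcases eq_or_ne a x with rfl | h
    · simp
    · simp [h]
  · intro b _
    rcases eq_or_ne a x with rfl | h
    · rcases eq_or_ne b y with rfl | hb
      · split <;> omega
      · simp [hb]
    · simp [h]

lemma move_col_src (W : X → X → ℕ) {x y y' : X} (hpos : 0 < W x y) (hne : y ≠ y') :
    col (move W x y y') y = col W y - 1 := by
  unfold move col
  rw [Finset.sum_tsub_distrib]
  · simp [hne]
  · intro a _
    rcases eq_or_ne a x with rfl | h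
    · simp [hne]; omega
    · simp [h]

lemma move_col_tgt (W : X → X → ℕ) (x : X) {y y' : X} (hne : y ≠ y') :
    col (move W x y y') y' = col W y' + 1 := by
  unfold move col
  have h : ∀ a, (W a y' + (if a = x ∧ y' = y' then 1 else 0)) - (if a = x ∧ y' = y then 1 else 0)
      = W a y' + (if a = x then 1 else 0) := by
    intro a; simp [hne.symm]
  rw [Finset.sum_congr rfl (fun a _ => h a), Finset.sum_add_distrib]
  simp

lemma move_col_other (W : X → X → ℕ) (x : X) {y y' b : X} (h1 : b ≠ y) (h2 : b ≠ y') :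
    col (move W x y y') b = col W b := by
  simp [move, col, h1, h2]

lemma move_le (W : X → X → ℕ) {x y y' a b : X} (h : ¬ (a = x ∧ b = y')) :
    move W x y y' a b ≤ W a b := by
  simp only [move, h, if_false]
  omega

lemma move_ge (W : X → X → ℕ) (x : X) {y : X} (y' : X) {a b : X} (h : b ≠ y) :
    W a b ≤ move W x y y' a b := by
  have h2 : (if a = x ∧ b = y then 1 else 0) = 0 := by simp [h]
  simp only [move, h2]
  omega

/-- The Hall-condition argument: some reachable column is unsaturated. -/
lemma exists_reach_unsat (E : X → X → Prop) [DecidableRel E] (α β : X → ℕ)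
    (hall : ∀ D : Finset X, ∑ x ∈ D, α x ≤ ∑ y ∈ Nout E D, β y)
    (W : X → X → ℕ)
    (hsupp : ∀ x y, ¬ E x y → W x y = 0)
    (hrow : ∀ x, ∑ y, W x y ≤ α x)
    (hcol : ∀ y, col W y ≤ β y)
    {x0 : X} (hx0 : ∑ y, W x0 y < α x0) :
    ∃ n y, ReachN E W x0 n y ∧ col W y < β y := by
  classical
  by_contra hcon
  push_neg at hcon
  set R : Finset X := univ.filter (fun y => ∃ n, ReachN E W x0 n y) with hRdef
  set D : Finset X := univ.filter
    (fun x => x = x0 ∨ ∃ y n, ReachN E W x0 n y ∧ 0 < W x y) with hDdef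
  have hx0D : x0 ∈ D := by simp [hDdef]
  have hDR : ∀ x ∈ D, ∀ y, E x y → y ∈ R := by
    intro x hx y hE
    simp only [hDdef, mem_filter, mem_univ, true_and] at hx
    simp only [hRdef, mem_filter, mem_univ, true_and]
    rcases hx with rfl | ⟨z, n, hz, hpos⟩
    · exact ⟨0, hE⟩
    · exact ⟨n + 1, x, z, hz, hpos, hE⟩
  have hNout : Nout E D ⊆ R := by
    intro y hy
    simp only [Nout, mem_biUnion, mem_filter, mem_univ, true_and] at hy
    rcases hy with ⟨x, hx, hE⟩
    exact hDR x hx y hE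
  have hcolR : ∀ y ∈ R, β y = col W y := by
    intro y hy
    simp only [hRdef, mem_filter, mem_univ, true_and] at hy
    rcases hy with ⟨n, hn⟩
    exact le_antisymm (hcon n y hn) (hcol y)
  have hxnotD : ∀ x, x ∉ D → ∀ y ∈ R, W x y = 0 := by
    intro x hx y hy
    by_contra hne
    apply hx
    simp only [hRdef, mem_filter, mem_univ, true_and] at hy
    rcases hy with ⟨n, hn⟩
    simp only [hDdef, mem_filter, mem_univ, true_and]
    exact Or.inr ⟨y, n, hn, Nat.pos_of_ne_zero hne⟩
  have hrowR : ∀ x ∈ D, ∑ y ∈ R, W x y = ∑ y, W x y := by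
    intro x hx
    apply Finset.sum_subset (Finset.subset_univ R)
    intro y _ hy
    by_contra hne
    have hE : E x y := by
      by_contra hnE; exact hne (hsupp x y hnE)
    exact hy (hDR x hx y hE)
  have key : ∑ x ∈ D, α x < ∑ x ∈ D, α x := by
    calc ∑ x ∈ D, α x ≤ ∑ y ∈ Nout E D, β y := hall D
      _ ≤ ∑ y ∈ R, β y := Finset.sum_le_sum_of_subset hNout
      _ = ∑ y ∈ R, col W y := Finset.sum_congr rfl hcolR
      _ = ∑ y ∈ R, ∑ x ∈ D, W x y := by
          refine Finset.sum_congr rfl (fun y hy => ?_)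
          unfold col
          rw [← Finset.sum_subset (Finset.subset_univ D)]
          intro x _ hx
          exact hxnotD x hx y hy
      _ = ∑ x ∈ D, ∑ y ∈ R, W x y := Finset.sum_comm
      _ = ∑ x ∈ D, ∑ y, W x y := Finset.sum_congr rfl hrowR
      _ < ∑ x ∈ D, α x := Finset.sum_lt_sum (fun i _ => hrow i) ⟨x0, hx0D, hx0⟩
  exact absurd key (lt_irrefl _)

/-- Augmenting along an alternating path to an unsaturated column strictly
decreases the total deficiency. -/
lemma descend (E : X → X → Prop) (α β : X → ℕ) (x0 : X) :
    ∀ n (W : X → X → ℕ),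
      (∀ x y, ¬ E x y → W x y = 0) → (∀ x, ∑ y, W x y ≤ α x) → (∀ y, col W y ≤ β y) →
      (∑ y, W x0 y < α x0) →
      (∃ y, ReachN E W x0 n y ∧ col W y < β y) →
      ∃ W', Relation.ReflTransGen (Step E α β) W W' ∧
        (∀ x y, ¬ E x y → W' x y = 0) ∧ (∀ x, ∑ y, W' x y ≤ α x) ∧ (∀ y, col W' y ≤ β y) ∧
        (∑ x, (α x - ∑ y, W' x y)) < (∑ x, (α x - ∑ y, W x y)) := by
  intro n
  induction n using Nat.strong_induction_on with
  | _ n ih =>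
  intro W hsupp hrow hcol hx0 hEx
  obtain ⟨y, hy, hcoly⟩ := hEx
  by_cases hmin : ∃ m, m < n ∧ ∃ y', ReachN E W x0 m y' ∧ col W y' < β y'
  · rcases hmin with ⟨m, hm, hEx'⟩
    exact ih m hm W hsupp hrow hcol hx0 hEx'
  push_neg at hmin
  cases n with
  | zero =>
    -- direct allocation move
    refine ⟨add1 W x0 y, Relation.ReflTransGen.single
      (Or.inl ⟨x0, y, hy, hx0, hcoly, rfl⟩), ?_, ?_, ?_, ?_⟩
    · intro a b hnE
      have hab : ¬ (a = x0 ∧ b = y) := by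
        rintro ⟨rfl, rfl⟩; exact hnE hy
      simp [add1, hab, hsupp a b hnE]
    · intro a
      rcases eq_or_ne a x0 with rfl | h
      · rw [add1_row_self]; omega
      · rw [add1_row_ne _ _ h]; exact hrow a
    · intro b
      rcases eq_or_ne b y with rfl | h
      · rw [add1_col_self]; omega
      · rw [add1_col_ne _ _ h]; exact hcol b
    · apply Finset.sum_lt_sum
      · intro a _
        rcases eq_or_ne a x0 with rfl | h
        · rw [add1_row_self]; omega
        · rw [add1_row_ne _ _ h]
      · refine ⟨x0, Finset.mem_univ _, ?_⟩
        rw [add1_row_self]; omega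
  | succ m =>
    obtain ⟨x, z, hz, hpos, hE⟩ := hy
    -- by minimality, z is saturated
    have hzsat : col W z = β z := le_antisymm (hcol z) (hmin m (Nat.lt_succ_self m) z hz)
    have hzy : z ≠ y := by
      intro h; rw [h] at hzsat; omega
    have hzcolpos : 0 < col W z := by
      have : W x z ≤ col W z := Finset.single_le_sum (f := fun a => W a z) (fun a _ => Nat.zero_le _) (Finset.mem_univ x)
      omega
    set W1 := move W x z y with hW1def
    have hstep : Step E α β W W1 := Or.inr ⟨x, z, y, hpos, hE, hcoly, rfl⟩
    have hrow1 : ∀ a, ∑ b, W1 a b = ∑ b, W a b := move_row W y hpos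
    have hsupp1 : ∀ a b, ¬ E a b → W1 a b = 0 := by
      intro a b hnE
      have hab : ¬ (a = x ∧ b = y) := by
        rintro ⟨rfl, rfl⟩; exact hnE hE
      have h1 : W1 a b ≤ W a b := move_le W hab
      have h2 : W a b = 0 := hsupp a b hnE
      omega
    have hcol1 : ∀ b, col W1 b ≤ β b := by
      intro b
      rcases eq_or_ne b z with rfl | h1
      · rw [hW1def, move_col_src W hpos hzy]; omega
      rcases eq_or_ne b y with rfl | h2
      · rw [hW1def, move_col_tgt W x hzy]; omega
      · rw [hW1def, move_col_other W x h1 h2]; exact hcol b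
    have hx01 : ∑ b, W1 x0 b < α x0 := by rw [hrow1]; exact hx0
    have hrowle1 : ∀ a, ∑ b, W1 a b ≤ α a := by
      intro a; rw [hrow1]; exact hrow a
    -- reachability of z survives the move
    have hminz : ∀ m', m' < m → ¬ ReachN E W x0 m' z := by
      intro m' hm' hr
      have : β y ≤ col W y :=
        hmin (m' + 1) (by omega) y ⟨x, z, hr, hpos, hE⟩
      omega
    have hreach1 : ReachN E W1 x0 m z :=
      reachN_mono E (fun a b hb => move_ge W x y hb) m z hz hminz
    have hcolz1 : col W1 z < β z := by
      rw [hW1def, move_col_src W hpos hzy]; omega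
    obtain ⟨W2, hrtg, i1, i2, i3, hdef⟩ :=
      ih m (Nat.lt_succ_self m) W1 hsupp1 hrowle1 hcol1 hx01 ⟨z, hreach1, hcolz1⟩
    refine ⟨W2, Relation.ReflTransGen.head hstep hrtg, i1, i2, i3, ?_⟩
    calc (∑ a, (α a - ∑ b, W2 a b)) < ∑ a, (α a - ∑ b, W1 a b) := hdef
      _ = ∑ a, (α a - ∑ b, W a b) := by
        exact Finset.sum_congr rfl (fun a _ => by rw [hrow1 a])

end Aux

/-- Under the Hall-type condition, from every partial allocation state that is not a complete
allocation state, a finite sequence of elementary moves leads to a complete allocation state. -/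
theorem reach_complete_allocation {X : Type*} [Fintype X] [DecidableEq X]
    (E : X → X → Prop) [DecidableRel E] (α β : X → ℕ)
    (hall : ∀ D : Finset X, ∑ x ∈ D, α x ≤ ∑ y ∈ Nout E D, β y)
    (W : X → X → ℕ)
    (hsupp : ∀ x y, ¬ E x y → W x y = 0)
    (hrow : ∀ x, ∑ y, W x y ≤ α x)
    (hcol : ∀ y, col W y ≤ β y)
    (hnotfull : ¬ ∀ x, ∑ y, W x y = α x) :
    ∃ W', Relation.ReflTransGen (Step E α β) W W' ∧ ∀ x, ∑ y, W' x y = α x := by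
  classical
  suffices main : ∀ d (W : X → X → ℕ),
      (∀ x y, ¬ E x y → W x y = 0) → (∀ x, ∑ y, W x y ≤ α x) → (∀ y, col W y ≤ β y) →
      (∑ x, (α x - ∑ y, W x y)) < d →
      ∃ W', Relation.ReflTransGen (Step E α β) W W' ∧ ∀ x, ∑ y, W' x y = α x by
    exact main _ W hsupp hrow hcol (Nat.lt_succ_self _)
  intro d
  induction d with
  | zero => intro W _ _ _ h; omega
  | succ d ihd =>
    intro W hs hr hc hlt
    by_cases hfull : ∀ x, ∑ y, W x y = α x
    · exact ⟨W, Relation.ReflTransGen.refl, hfull⟩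
    · push_neg at hfull
      obtain ⟨x0, hx0⟩ := hfull
      have hx0' : ∑ y, W x0 y < α x0 := lt_of_le_of_ne (hr x0) hx0
      obtain ⟨n, y, hny, hcy⟩ := exists_reach_unsat E α β hall W hs hr hc hx0'
      obtain ⟨W1, hrtg, i1, i2, i3, hdef⟩ := descend E α β x0 n W hs hr hc hx0' ⟨y, hny, hcy⟩
      obtain ⟨W', hrtg2, hW'⟩ := ihd W1 i1 i2 i3 (by omega)
      exact ⟨W', hrtg.trans hrtg2, hW'⟩
end

section
/- Let (W¹, W²) be a minimal pair of complete allocation states, i.e., δ(W¹,W²) ≤ δ(W¹', W²') for every W¹' reachable from W¹ and W²' reachable from W² via distribution moves, where δ(W¹,W²) = Σ_{x,y} |W¹_{xy} − W²_{xy}|. If y ∈ X satisfies W¹_y < β_y (resource y not saturated under W¹), then W¹_{xy} = W²_{xy} for all x ∈ X. -/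
open Finset

/-- A distribution move: unit `x` moves one atom from `y` to an available resource `y'`. -/
def DistMove {X : Type*} [Fintype X] [DecidableEq X] (E : X → X → Prop) (β : X → ℕ)
    (W W' : X → X → ℕ) : Prop :=
  ∃ x y y', 0 < W x y ∧ E x y' ∧ col W y' < β y' ∧ W' = move W x y y'

/-- The distance `δ(W¹,W²) = Σ_{x,y} |W¹_{xy} − W²_{xy}|`. -/
def delta {X : Type*} [Fintype X] (W1 W2 : X → X → ℕ) : ℕ :=
  ∑ x, ∑ y, ((W1 x y : ℤ) - (W2 x y : ℤ)).natAbs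

lemma delta_comm {X : Type*} [Fintype X] (A B : X → X → ℕ) : delta A B = delta B A := by
  unfold delta
  refine Finset.sum_congr rfl fun a _ => Finset.sum_congr rfl fun b _ => ?_
  omega

lemma delta_move_lt {X : Type*} [Fintype X] [DecidableEq X] (A B : X → X → ℕ) (x y y' : X)
    (h1 : A x y < B x y) (h2 : B x y' < A x y') :
    delta (move A x y' y) B < delta A B := by
  have hne : y ≠ y' := by rintro rfl; omega
  unfold delta
  apply Finset.sum_lt_sum
  · intro a _
    apply Finset.sum_le_sum
    intro b _
    simp only [move]
    by_cases ha : a = x <;> by_cases hb : b = y <;> by_cases hb' : b = y' <;>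
      simp_all <;> omega
  · refine ⟨x, mem_univ x, ?_⟩
    apply Finset.sum_lt_sum
    · intro b _
      simp only [move]
      by_cases hb : b = y <;> by_cases hb' : b = y' <;> simp_all <;> omega
    · refine ⟨y, mem_univ y, ?_⟩
      simp only [move]
      simp [hne]
      omega

lemma exists_gt_col {X : Type*} [Fintype X] (A B : X → X → ℕ) (x y : X)
    (hrow : ∑ b, A x b = ∑ b, B x b) (h : A x y < B x y) :
    ∃ y', B x y' < A x y' := by
  by_contra h'
  push_neg at h'
  have : ∑ b, A x b < ∑ b, B x b :=
    Finset.sum_lt_sum (fun b _ => h' b) ⟨y, mem_univ y, h⟩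
  omega

/-- Lemma 3 of the paper: if `(W¹, W²)` is a minimal pair of complete allocation states and
resource `y` is not saturated under `W¹`, then the `y`-columns of `W¹` and `W²` agree. -/
theorem minimal_pair_column_eq {X : Type*} [Fintype X] [DecidableEq X]
    (E : X → X → Prop) (α β : X → ℕ)
    (W1 W2 : X → X → ℕ)
    (h1supp : ∀ x y, ¬ E x y → W1 x y = 0)
    (h1row : ∀ x, ∑ y, W1 x y = α x)
    (h1col : ∀ y, col W1 y ≤ β y)
    (h2supp : ∀ x y, ¬ E x y → W2 x y = 0)
    (h2row : ∀ x, ∑ y, W2 x y = α x)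
    (h2col : ∀ y, col W2 y ≤ β y)
    (hmin : ∀ V1 V2, Relation.ReflTransGen (DistMove E β) W1 V1 →
        Relation.ReflTransGen (DistMove E β) W2 V2 → delta W1 W2 ≤ delta V1 V2)
    (y : X) (hy : col W1 y < β y) :
    ∀ x, W1 x y = W2 x y := by
  -- Step 1: W2 x y ≤ W1 x y for all x
  have step1 : ∀ x, W2 x y ≤ W1 x y := by
    intro x
    by_contra hlt
    push_neg at hlt
    obtain ⟨y', hy'⟩ := exists_gt_col W1 W2 x y (by rw [h1row, h2row]) hlt
    have hExy : E x y := by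
      by_contra hE
      have := h2supp x y hE
      omega
    have hmove : DistMove E β W1 (move W1 x y' y) :=
      ⟨x, y', y, by omega, hExy, hy, rfl⟩
    have hle := hmin (move W1 x y' y) W2 (Relation.ReflTransGen.single hmove)
      Relation.ReflTransGen.refl
    have := delta_move_lt W1 W2 x y y' hlt hy'
    omega
  -- Step 2: col W2 y < β y
  have hcol2 : col W2 y < β y := by
    have : col W2 y ≤ col W1 y := Finset.sum_le_sum fun x _ => step1 x
    omega
  -- Step 3: W1 x y ≤ W2 x y
  intro x
  by_contra hne
  have hlt : W2 x y < W1 x y := lt_of_le_of_ne (step1 x) (fun h => hne h.symm)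
  obtain ⟨y', hy'⟩ := exists_gt_col W2 W1 x y (by rw [h1row, h2row]) hlt
  have hExy : E x y := by
    by_contra hE
    have := h1supp x y hE
    omega
  have hmove : DistMove E β W2 (move W2 x y' y) :=
    ⟨x, y', y, by omega, hExy, hcol2, rfl⟩
  have hle := hmin W1 (move W2 x y' y) Relation.ReflTransGen.refl
    (Relation.ReflTransGen.single hmove)
  have := delta_move_lt W2 W1 x y y' hlt hy'
  rw [delta_comm W1 W2] at hle
  rw [delta_comm W1 (move W2 x y' y)] at hle
  omega
end

section
/- For the undirected line graph on X = {1, …, n}, where N_i = {i−1, i+1} ∩ X, the Hall-type solvability condition Σ_{x∈D} α_x ≤ Σ_{y∈N(D)} β_y for all D ⊆ X holds if and only if it holds for all subsets of the form D = {i, i+2, i+4, …, i+2s} ⊆ X (arithmetic progressions of step 2). -/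
open Finset

/-- Neighborhood of node `i` in the undirected line graph on `{1, …, n}`:
`N_i = {i−1, i+1} ∩ {1, …, n}`. -/
def lineN (n i : ℕ) : Finset ℕ :=
  (Finset.Icc 1 n).filter (fun y => y = i - 1 ∨ y = i + 1)

/-- Neighborhood of a set in the line graph. -/
def lineNout (n : ℕ) (D : Finset ℕ) : Finset ℕ :=
  D.biUnion (lineN n)

/-- The step-2 arithmetic progression `{i, i+2, …, i+2s}`. -/
def AP (i s : ℕ) : Finset ℕ :=
  (Finset.range (s + 1)).image (fun k => i + 2 * k)

lemma mem_AP {i s x : ℕ} : x ∈ AP i s ↔ ∃ k, k ≤ s ∧ x = i + 2 * k := by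
  simp [AP, Nat.lt_succ_iff, eq_comm]

lemma mem_lineN {n i z : ℕ} : z ∈ lineN n i ↔ (1 ≤ z ∧ z ≤ n) ∧ (z = i - 1 ∨ z = i + 1) := by
  simp [lineN, mem_Icc]

lemma lineN_cases {n x y z : ℕ} (hx : 1 ≤ x) (hy : 1 ≤ y)
    (h1 : z ∈ lineN n x) (h2 : z ∈ lineN n y) : x = y ∨ x + 2 = y ∨ y + 2 = x := by
  rw [mem_lineN] at h1 h2
  omega

lemma lineNout_union (n : ℕ) (A B : Finset ℕ) :
    lineNout n (A ∪ B) = lineNout n A ∪ lineNout n B := by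
  ext z
  simp [lineNout, Finset.mem_biUnion, or_and_right, exists_or]

lemma key (n : ℕ) (α β : ℕ → ℕ)
    (H : ∀ i s : ℕ, AP i s ⊆ Finset.Icc 1 n →
        ∑ x ∈ AP i s, α x ≤ ∑ y ∈ lineNout n (AP i s), β y) :
    ∀ D : Finset ℕ, D ⊆ Finset.Icc 1 n → ∑ x ∈ D, α x ≤ ∑ y ∈ lineNout n D, β y := by
  intro D
  induction D using Finset.strongInduction with
  | _ D ih =>
    intro hD
    rcases D.eq_empty_or_nonempty with rfl | hne
    · simp [lineNout]
    set m := D.min' hne with hmdef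
    have hm : m ∈ D := D.min'_mem hne
    have hm1 : 1 ≤ m := (mem_Icc.mp (hD hm)).1
    have hbound : ∀ k, AP m k ⊆ D → k ≤ n := by
      intro k hk
      have h1 : m + 2 * k ∈ D := hk (mem_AP.mpr ⟨k, le_refl _, rfl⟩)
      have := mem_Icc.mp (hD h1)
      omega
    set s := Nat.findGreatest (fun k => AP m k ⊆ D) n with hs
    have h0 : AP m 0 ⊆ D := by
      intro x hx
      rw [mem_AP] at hx
      obtain ⟨k, hk, rfl⟩ := hx
      interval_cases k
      simpa using hm
    have hAP : AP m s ⊆ D := Nat.findGreatest_spec (P := fun k => AP m k ⊆ D) (Nat.zero_le n) h0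
    -- maximality
    have hmax : m + 2 * (s + 1) ∉ D := by
      intro hcon
      have hsub : AP m (s + 1) ⊆ D := by
        intro x hx
        rw [mem_AP] at hx
        obtain ⟨k, hk, rfl⟩ := hx
        rcases Nat.lt_or_ge k (s + 1) with h | h
        · exact hAP (mem_AP.mpr ⟨k, by omega, rfl⟩)
        · have : k = s + 1 := by omega
          subst this; exact hcon
      have := Nat.le_findGreatest (P := fun k => AP m k ⊆ D) (hbound _ hsub) hsub
      omega
    set R := D \ AP m s with hR
    have hDR : AP m s ∪ R = D := Finset.union_sdiff_of_subset hAP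
    have hRss : R ⊂ D := by
      constructor
      · exact Finset.sdiff_subset
      · intro hsub
        have := hsub hm
        rw [hR, Finset.mem_sdiff] at this
        exact this.2 (mem_AP.mpr ⟨0, Nat.zero_le _, by omega⟩)
    have hdisj : Disjoint (lineNout n (AP m s)) (lineNout n R) := by
      rw [Finset.disjoint_left]
      intro z hz1 hz2
      simp only [lineNout, Finset.mem_biUnion] at hz1 hz2
      obtain ⟨x, hx, hzx⟩ := hz1
      obtain ⟨y, hy, hzy⟩ := hz2
      have hyD : y ∈ D := (Finset.mem_sdiff.mp hy).1
      have hyA : y ∉ AP m s := (Finset.mem_sdiff.mp hy).2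
      have hy1 : 1 ≤ y := (mem_Icc.mp (hD hyD)).1
      have hym : m ≤ y := D.min'_le y hyD
      obtain ⟨k, hk, rfl⟩ := mem_AP.mp hx
      have hx1 : 1 ≤ m + 2 * k := by omega
      rcases lineN_cases hx1 hy1 hzx hzy with h | h | h
      · exact hyA (mem_AP.mpr ⟨k, hk, h.symm⟩)
      · rcases Nat.lt_or_ge k s with hks | hks
        · exact hyA (mem_AP.mpr ⟨k + 1, by omega, by omega⟩)
        · have : k = s := by omega
          exact hmax (by rw [show m + 2 * (s + 1) = y by omega]; exact hyD)
      · have hk1 : 1 ≤ k := by omega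
        exact hyA (mem_AP.mpr ⟨k - 1, by omega, by omega⟩)
    have hdisjAR : Disjoint (AP m s) R := Finset.disjoint_sdiff
    calc ∑ x ∈ D, α x = ∑ x ∈ AP m s, α x + ∑ x ∈ R, α x := by
          rw [← hDR, Finset.sum_union hdisjAR]
      _ ≤ ∑ y ∈ lineNout n (AP m s), β y + ∑ y ∈ lineNout n R, β y := by
          gcongr
          · exact H m s (hAP.trans hD)
          · exact ih R hRss (Finset.sdiff_subset.trans hD)
      _ = ∑ y ∈ lineNout n D, β y := by
          rw [← hDR, lineNout_union, Finset.sum_union hdisj]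

/-- For the line graph on `{1, …, n}`, the Hall-type solvability condition holds for all
subsets iff it holds for all step-2 arithmetic progressions contained in `{1, …, n}`. -/
theorem line_graph_hall_iff_progressions (n : ℕ) (α β : ℕ → ℕ) :
    (∀ D ⊆ Finset.Icc 1 n, ∑ x ∈ D, α x ≤ ∑ y ∈ lineNout n D, β y) ↔
    (∀ i s : ℕ, AP i s ⊆ Finset.Icc 1 n →
        ∑ x ∈ AP i s, α x ≤ ∑ y ∈ lineNout n (AP i s), β y) := by
  constructor
  · intro h i s hsub
    exact h _ hsub
  · intro H D hD
    exact key n α β H D hD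
end
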